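/- arXiv:1702.02810 — 7 statements merged into one kernel-verified Lean document; each statement's English description precedes it below -/
import Mathlib

section
/- Let μ > 0, δ > 0, 0 ≤ γ < 1 and bo > 0, and set ν = (1 + γδ)/(3δ(γ+δ)) − 1/bo. Define, for real k ≠ 0, ω²_{F.E.}(k) = (γ+δ)·|k|·tanh(√μ|k|)·(1 + μk²/bo)·tanh(√μ|k|/δ) / (√μ·(tanh(√μ|k|) + γ·tanh(√μ|k|/δ))). Then the function k ↦ ω²_{F.E.}(k) − k² + μνk⁴ is O(k⁶) as k → 0 through nonzero values. -/
open Asymptotics Filter Topology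
open scoped Nat

/-! With `x = √μ |k|` and `T x = tanh x / x`, the dispersion relation factors as
`ω²(k) = k² (γ + δ) (1 + μ k² / bo) T(x) T(x/δ) / (δ T(x) + γ T(x/δ))`.
The Taylor expansion of `exp` gives `T x = 1 - x² / 3 + O(x⁴)`, so both factors are
`1 - a μ k² + O(k⁴)`; expanding the ratio to first order in `μ k²`, its linear coefficient
is exactly `-ν`. -/

namespace Real

lemma tanh_pos {x : ℝ} (hx : 0 < x) : 0 < tanh x := by
  rw [tanh_eq_sinh_div_cosh]
  exact div_pos (sinh_pos_iff.mpr hx) (cosh_pos x)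

lemma sinh_sub_mul_cosh_isBigO :
    (fun x => sinh x - (x - x ^ 3 / 3) * cosh x) =O[𝓝 0] fun x => x ^ 5 := by
  set E : ℝ → ℝ := fun x => exp x - ∑ i ∈ Finset.range 5, x ^ i / i ! with hE
  have hE5 : E =O[𝓝 0] fun x => x ^ 5 := exp_sub_sum_range_isBigO_pow 5
  have hEneg : (fun x => E (-x)) =O[𝓝 0] fun x => x ^ 5 :=
    (hE5.comp_tendsto (continuous_neg.tendsto' 0 0 neg_zero)).trans
      (isBigO_of_le _ fun x => by simp)
  have h7 : (fun x : ℝ => x ^ 7) =O[𝓝 0] fun x => x ^ 5 :=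
    (isLittleO_pow_pow (by norm_num)).isBigO
  have hp : (fun x : ℝ => x - x ^ 3 / 3) =O[𝓝 0] fun _ => (1 : ℝ) :=
    ((by fun_prop : Continuous fun x : ℝ => x - x ^ 3 / 3).tendsto 0).isBigO_one ℝ
  -- With `p x = x - x³/3`:
  -- `sinh x - p x cosh x = x⁵/8 + x⁷/72 + (E x - E (-x))/2 - p x (E x + E (-x))/2`.
  have hsum := ((((isBigO_refl (fun x : ℝ => x ^ 5) _).const_mul_left (1 / 8)).add
    (h7.const_mul_left (1 / 72))).add ((hE5.sub hEneg).const_mul_left (1 / 2))).sub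
    (((hp.mul (hE5.add hEneg)).congr_right fun x => one_mul _).const_mul_left (1 / 2))
  refine hsum.congr_left fun x => ?_
  simp only [hE, sinh_eq, cosh_eq, Finset.sum_range_succ, Finset.sum_range_zero, Nat.factorial]
  push_cast
  ring

lemma tanh_sub_isBigO : (fun x => tanh x - (x - x ^ 3 / 3)) =O[𝓝 0] fun x => x ^ 5 := by
  have hcosh : (fun x => (cosh x)⁻¹) =O[𝓝 0] fun _ => (1 : ℝ) :=
    ((continuous_cosh.tendsto 0).inv₀ (cosh_pos 0).ne').isBigO_one ℝ
  refine (sinh_sub_mul_cosh_isBigO.mul hcosh).congr (fun x => ?_) fun x => mul_one _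
  rw [tanh_eq_sinh_div_cosh]
  field_simp [(cosh_pos x).ne']

lemma tanh_div_self_sub_isBigO :
    (fun x => tanh x / x - (1 - x ^ 2 / 3)) =O[𝓝[≠] 0] fun x => x ^ 4 := by
  refine ((tanh_sub_isBigO.mono nhdsWithin_le_nhds).mul (isBigO_refl (fun x => x⁻¹) _)).congr'
    ?_ ?_ <;> filter_upwards [self_mem_nhdsWithin] with x (hx : x ≠ 0) <;> field_simp

lemma tanh_mul_abs_div_sub_isBigO {r : ℝ} (hr : r ≠ 0) :
    (fun k => tanh (r * |k|) / (r * |k|) - (1 - r ^ 2 / 3 * k ^ 2)) =O[𝓝[≠] 0]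
      fun k => k ^ 4 := by
  have hlim : Tendsto (fun k => r * |k|) (𝓝[≠] 0) (𝓝[≠] 0) := by
    refine tendsto_nhdsWithin_iff.mpr ⟨?_, ?_⟩
    · exact ((continuous_const.mul continuous_abs).tendsto' 0 0 (by simp)).mono_left
        nhdsWithin_le_nhds
    · filter_upwards [self_mem_nhdsWithin] with k (hk : k ≠ 0)
      simp [hr, hk]
  refine (tanh_div_self_sub_isBigO.comp_tendsto hlim).congr' (.of_forall fun k => ?_) ?_
    |>.trans (isBigO_const_mul_self (r ^ 4) _ _)
  · simp only [Function.comp_apply, mul_pow, sq_abs]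
    ring
  · exact .of_forall fun k => by simp [mul_pow, Even.pow_abs ⟨2, rfl⟩]

end Real

section TwoLayerRatio

variable {α : Type*} {l : Filter α} {s : α → ℝ}

lemma isBigO_one_comp_of_continuous (hs : Tendsto s l (𝓝 0)) {g : ℝ → ℝ}
    (hg : Continuous g) :
    (fun x => g (s x)) =O[l] fun _ => (1 : ℝ) :=
  ((hg.tendsto 0).comp hs).isBigO_one ℝ

lemma isBigO_two_layer_ratio_sub {A B : α → ℝ} {a b c γ δ ν : ℝ} (hγδ : γ + δ ≠ 0)
    (hν : ν = (γ * a + δ * b) / (γ + δ) - c) (hs : Tendsto s l (𝓝 0))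
    (hA : (fun x => A x - (1 - a * s x)) =O[l] fun x => s x ^ 2)
    (hB : (fun x => B x - (1 - b * s x)) =O[l] fun x => s x ^ 2) :
    (fun x => (γ + δ) * (1 + c * s x) * A x * B x / (δ * A x + γ * B x) - (1 - ν * s x))
      =O[l] fun x => s x ^ 2 := by
  have hs2 : Tendsto (fun x => s x ^ 2) l (𝓝 0) := by simpa using hs.pow 2
  have hA0 := hA.trans_tendsto hs2
  have hB0 := hB.trans_tendsto hs2
  have hD : Tendsto (fun x => δ * A x + γ * B x) l (𝓝 (γ + δ)) := by
    have hA1 := hA0.add ((tendsto_const_nhds (x := 1)).sub (hs.const_mul a))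
    have hB1 := hB0.add ((tendsto_const_nhds (x := 1)).sub (hs.const_mul b))
    simpa [add_comm γ] using (hA1.const_mul δ).add (hB1.const_mul γ)
  have hν' : ν * (γ + δ) = γ * a + δ * b - c * (γ + δ) := by
    rw [hν]; field_simp
  -- Write `A = 1 - a s + RA`, `B = 1 - b s + RB`: the remainder-free part of the numerator is
  -- `s² (q₀ + q₁ s)` because its linear term vanishes by the choice of `ν`.
  have hN : (fun x => (γ + δ) * (1 + c * s x) * A x * B x
      - (1 - ν * s x) * (δ * A x + γ * B x)) =O[l] fun x => s x ^ 2 := by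
    have hpoly := (isBigO_refl (fun x => s x ^ 2) l).mul (isBigO_one_comp_of_continuous hs
      (g := fun t => (γ + δ) * (a * b - c * (a + b)) - ν * (δ * a + γ * b)
        + (γ + δ) * c * a * b * t) (by fun_prop))
    have hRA := hA.mul (isBigO_one_comp_of_continuous hs
      (g := fun t => (γ + δ) * (1 + c * t) * (1 - b * t) - (1 - ν * t) * δ) (by fun_prop))
    have hRB := hB.mul (isBigO_one_comp_of_continuous hs
      (g := fun t => (γ + δ) * (1 + c * t) * (1 - a * t) - (1 - ν * t) * γ) (by fun_prop))
    have hRAB := ((hA.mul (hB0.isBigO_one ℝ)).congr_right fun x => mul_one _).mul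
      (isBigO_one_comp_of_continuous hs (g := fun t => (γ + δ) * (1 + c * t)) (by fun_prop))
    refine (((hpoly.add hRA).add hRB).add hRAB).congr (fun x => ?_) fun x => by ring
    linear_combination -s x * hν'
  refine (hN.mul ((hD.inv₀ hγδ).isBigO_one ℝ)).congr' ?_ (.of_forall fun x => mul_one _)
  filter_upwards [hD.eventually_ne hγδ] with x hx
  field_simp

end TwoLayerRatio

theorem stmt_5_general (μ δ γ bo ν : ℝ) (hμ : 0 < μ) (hδ : 0 < δ) (hγ0 : 0 ≤ γ)
    (hν : ν = (1 + γ * δ) / (3 * δ * (γ + δ)) - 1 / bo) :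
    (fun k : ℝ =>
        (γ + δ) * |k| * Real.tanh (Real.sqrt μ * |k|) * (1 + μ * k ^ 2 / bo)
            * Real.tanh (Real.sqrt μ * |k| / δ)
          / (Real.sqrt μ * (Real.tanh (Real.sqrt μ * |k|)
              + γ * Real.tanh (Real.sqrt μ * |k| / δ)))
        - k ^ 2 + μ * ν * k ^ 4)
    =O[nhdsWithin (0 : ℝ) {(0 : ℝ)}ᶜ] (fun k : ℝ => k ^ 6) := by
  obtain ⟨m, hm, rfl⟩ : ∃ m, 0 < m ∧ μ = m ^ 2 :=
    ⟨√μ, Real.sqrt_pos.mpr hμ, (Real.sq_sqrt hμ.le).symm⟩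
  rw [Real.sqrt_sq hm.le]
  have hγδ : 0 < γ + δ := by positivity
  have hs : Tendsto (fun k : ℝ => k ^ 2) (𝓝[≠] 0) (𝓝 0) :=
    ((continuous_pow 2).tendsto' 0 0 (by simp)).mono_left nhdsWithin_le_nhds
  have hk4 (k : ℝ) : k ^ 4 = (k ^ 2) ^ 2 := by ring
  have hA := (Real.tanh_mul_abs_div_sub_isBigO hm.ne').congr_right hk4
  have hB := (Real.tanh_mul_abs_div_sub_isBigO (div_pos hm hδ).ne').congr_right hk4
  have hF := isBigO_two_layer_ratio_sub (c := m ^ 2 / bo) (ν := m ^ 2 * ν) hγδ.ne'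
    (by rw [hν]; field_simp; ring) hs hA hB
  refine ((isBigO_refl (fun k : ℝ => k ^ 2) _).mul hF).congr' ?_ (.of_forall fun k => by ring)
  filter_upwards [self_mem_nhdsWithin] with k (hk : k ≠ 0)
  have h1 : 0 < Real.tanh (m * |k|) := Real.tanh_pos (by positivity)
  have h2 : 0 < Real.tanh (m * |k| / δ) := Real.tanh_pos (by positivity)
  rw [div_mul_eq_mul_div, ← sq_abs k, show k ^ 4 = |k| ^ 4 by rw [Even.pow_abs ⟨2, rfl⟩]]
  field_simp
  ring

/-- Small-wavenumber expansion of the full Euler dispersion relation: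
ω²_{F.E.}(k) = k² − μνk⁴ + O(k⁶) as k → 0, k ≠ 0. -/
theorem stmt_5 (μ δ γ bo ν : ℝ) (hμ : 0 < μ) (hδ : 0 < δ) (hγ0 : 0 ≤ γ) (hγ1 : γ < 1)
    (hbo : 0 < bo) (hν : ν = (1 + γ * δ) / (3 * δ * (γ + δ)) - 1 / bo) :
    (fun k : ℝ =>
        (γ + δ) * |k| * Real.tanh (Real.sqrt μ * |k|) * (1 + μ * k ^ 2 / bo)
            * Real.tanh (Real.sqrt μ * |k| / δ)
          / (Real.sqrt μ * (Real.tanh (Real.sqrt μ * |k|)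
              + γ * Real.tanh (Real.sqrt μ * |k| / δ)))
        - k ^ 2 + μ * ν * k ^ 4)
    =O[nhdsWithin (0 : ℝ) {(0 : ℝ)}ᶜ] (fun k : ℝ => k ^ 6) :=
  stmt_5_general μ δ γ bo ν hμ hδ hγ0 hν
end

section
/- Let 0 ≤ γ < 1, δ > 0, ε ∈ ℝ, and (ζ, v) ∈ ℝ² be such that h₁ := 1 − εζ > 0, h₂ := 1/δ + εζ > 0, and D := (γ+δ) − γ(h₁+h₂)²ε²v²/(h₁+γh₂)³ > 0. Set f = h₁h₂/(h₁+γh₂), f' = (h₁²−γh₂²)/(h₁+γh₂)², f'' = −2γ(h₁+h₂)²/(h₁+γh₂)³, and let A be the 2×2 real matrix with first row (εf'v, f) and second row ((γ+δ) + ε²f''v²/2, εf'v). Then (γ+δ) + ε²f''v²/2 = D, f > 0, and A has exactly two eigenvalues, both real and distinct, namely εf'v + √(f·D) and εf'v − √(f·D). -/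
lemma spec_aux (a f d : ℝ) (hf : 0 < f) (hd : 0 < d) :
    spectrum ℝ (!![a, f; d, a]) = {a + Real.sqrt (f * d), a - Real.sqrt (f * d)} := by
  have hsq : Real.sqrt (f * d) ^ 2 = f * d := Real.sq_sqrt (by positivity)
  ext x
  rw [spectrum.mem_iff, Matrix.isUnit_iff_isUnit_det, isUnit_iff_ne_zero, not_not]
  have : algebraMap ℝ (Matrix (Fin 2) (Fin 2) ℝ) x - !![a, f; d, a]
      = !![x - a, -f; -d, x - a] := by
    ext i j
    fin_cases i <;> fin_cases j <;>
      simp [Matrix.algebraMap_matrix_apply]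
  rw [this, Matrix.det_fin_two_of]
  constructor
  · intro h
    have h2 : (x - a) ^ 2 = Real.sqrt (f * d) ^ 2 := by rw [hsq]; nlinarith
    rcases sq_eq_sq_iff_eq_or_eq_neg.mp h2 with h3 | h3
    · left; linarith
    · right
      simp only [Set.mem_singleton_iff]
      linarith
  · intro h
    rcases h with h | h <;> (try simp only [Set.mem_singleton_iff] at h) <;> subst h <;> nlinarith

/-- Strict hyperbolicity of the shallow-water part of the Green–Naghdi model:
the Jacobian of the flux has exactly two real distinct eigenvalues. -/
theorem stmt_8 (γ δ ε ζ v h₁ h₂ D f f' f'' : ℝ)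
    (hγ0 : 0 ≤ γ) (hγ1 : γ < 1) (hδ : 0 < δ)
    (hh₁ : h₁ = 1 - ε * ζ) (hh₂ : h₂ = 1 / δ + ε * ζ)
    (hh₁pos : 0 < h₁) (hh₂pos : 0 < h₂)
    (hD : D = (γ + δ) - γ * (h₁ + h₂) ^ 2 * ε ^ 2 * v ^ 2 / (h₁ + γ * h₂) ^ 3)
    (hDpos : 0 < D)
    (hf : f = h₁ * h₂ / (h₁ + γ * h₂))
    (hf' : f' = (h₁ ^ 2 - γ * h₂ ^ 2) / (h₁ + γ * h₂) ^ 2)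
    (hf'' : f'' = -2 * γ * (h₁ + h₂) ^ 2 / (h₁ + γ * h₂) ^ 3)
    (A : Matrix (Fin 2) (Fin 2) ℝ)
    (hA : A = !![ε * f' * v, f; (γ + δ) + ε ^ 2 * f'' * v ^ 2 / 2, ε * f' * v]) :
    (γ + δ) + ε ^ 2 * f'' * v ^ 2 / 2 = D ∧
    0 < f ∧
    ε * f' * v + Real.sqrt (f * D) ≠ ε * f' * v - Real.sqrt (f * D) ∧
    spectrum ℝ A = {ε * f' * v + Real.sqrt (f * D), ε * f' * v - Real.sqrt (f * D)} := by
  have hden : 0 < h₁ + γ * h₂ := by positivity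
  have hDeq : (γ + δ) + ε ^ 2 * f'' * v ^ 2 / 2 = D := by
    rw [hf'', hD]; ring
  have hfpos : 0 < f := by rw [hf]; positivity
  have hsqrt : 0 < Real.sqrt (f * D) := Real.sqrt_pos.mpr (by positivity)
  refine ⟨hDeq, hfpos, by intro h; nlinarith, ?_⟩
  rw [hA, hDeq]
  exact spec_aux _ _ _ hfpos hDpos
end

section
/- Let g > 0, α ≥ 1, v̄ ∈ ℝ, ζ̄ ∈ ℝ with 1 + ζ̄ ≠ 0, let k ≠ 0 be real and ω ∈ ℂ. There exists (ζ⁰, v⁰) ∈ ℂ² with (ζ⁰, v⁰) ≠ (0, 0) satisfying the two equations −iω·ζ⁰ + ik·v̄·ζ⁰ + (1+ζ̄)·ik·v⁰ = 0 and (1 + αk²/3)·(−iω·v⁰ + ik·v̄·v⁰ + ((α−1)/α)·g·ik·ζ⁰) + (1/α)·g·ik·ζ⁰ − (2/3)·g·ζ̄·k²·ik·ζ⁰/(1 + αk²/3) = 0, if and only if (ω − k·v̄)² = g·(1+ζ̄)·k²·(1 + (α−1)k²/3 − 2k²ζ̄/(3(1 + αk²/3)))/(1 + αk²/3). -/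
/-- Dispersion relation of the one-layer improved Green–Naghdi system linearized
around a constant state (ζ̄, v̄). -/
theorem stmt_9 (g α vb ζb : ℝ) (hg : 0 < g) (hα : 1 ≤ α) (hζb : 1 + ζb ≠ 0)
    (k : ℝ) (hk : k ≠ 0) (ω : ℂ) :
    (∃ ζ₀ v₀ : ℂ, (ζ₀, v₀) ≠ (0, 0) ∧
      (-Complex.I * ω * ζ₀ + Complex.I * (k : ℂ) * (vb : ℂ) * ζ₀
        + ((1 + ζb : ℝ) : ℂ) * Complex.I * (k : ℂ) * v₀ = 0) ∧
      (((1 + α * k ^ 2 / 3 : ℝ) : ℂ)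
          * (-Complex.I * ω * v₀ + Complex.I * (k : ℂ) * (vb : ℂ) * v₀
            + (((α - 1) / α * g : ℝ) : ℂ) * Complex.I * (k : ℂ) * ζ₀)
        + ((1 / α * g : ℝ) : ℂ) * Complex.I * (k : ℂ) * ζ₀
        - ((2 / 3 * g * ζb * k ^ 2 / (1 + α * k ^ 2 / 3) : ℝ) : ℂ)
            * Complex.I * (k : ℂ) * ζ₀ = 0))
    ↔ (ω - (k : ℂ) * (vb : ℂ)) ^ 2
      = ((g * (1 + ζb) * k ^ 2
          * (1 + (α - 1) * k ^ 2 / 3 - 2 * k ^ 2 * ζb / (3 * (1 + α * k ^ 2 / 3)))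
          / (1 + α * k ^ 2 / 3) : ℝ) : ℂ) := by
  have hα0 : (0:ℝ) < α := lt_of_lt_of_le one_pos hα
  have hA : (0:ℝ) < 1 + α * k ^ 2 / 3 := by positivity
  have hαc : (α:ℂ) ≠ 0 := by exact_mod_cast hα0.ne'
  have hkc : (k:ℂ) ≠ 0 := by exact_mod_cast hk
  have hAc : ((1 + α * k ^ 2 / 3 : ℝ) : ℂ) ≠ 0 := Complex.ofReal_ne_zero.mpr hA.ne'
  have hAc' : ((1:ℂ) + (α:ℂ) * (k:ℂ) ^ 2 / 3) ≠ 0 := by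
    have := hAc; push_cast at this; exact this
  have hζc : ((1 + ζb : ℝ) : ℂ) ≠ 0 := Complex.ofReal_ne_zero.mpr hζb
  have hI : Complex.I ≠ 0 := Complex.I_ne_zero
  -- abbreviations
  set K : ℂ := (k : ℂ) with hK
  set A : ℂ := ((1 + α * k ^ 2 / 3 : ℝ) : ℂ) with hAdef
  set L : ℂ := ((1 + ζb : ℝ) : ℂ) with hL
  set Cs : ℂ := A * (((α - 1) / α * g : ℝ) : ℂ) + ((1 / α * g : ℝ) : ℂ)
      - ((2 / 3 * g * ζb * k ^ 2 / (1 + α * k ^ 2 / 3) : ℝ) : ℂ) with hCs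
  set Rc : ℂ := ((g * (1 + ζb) * k ^ 2
          * (1 + (α - 1) * k ^ 2 / 3 - 2 * k ^ 2 * ζb / (3 * (1 + α * k ^ 2 / 3)))
          / (1 + α * k ^ 2 / 3) : ℝ) : ℂ) with hRc
  have h3r : (3:ℝ) + k ^ 2 * α ≠ 0 := by positivity
  have h3 : (3:ℂ) + (k:ℂ) ^ 2 * (α:ℂ) ≠ 0 := by exact_mod_cast Complex.ofReal_ne_zero.mpr h3r
  have h3b : (3:ℂ) + (α:ℂ) * (k:ℂ) ^ 2 ≠ 0 := by rw [mul_comm]; exact h3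
  have h9r : (9:ℝ) + k ^ 2 * α * 3 ≠ 0 := by positivity
  have h9 : (9:ℂ) + (k:ℂ) ^ 2 * (α:ℂ) * 3 ≠ 0 := by exact_mod_cast Complex.ofReal_ne_zero.mpr h9r
  -- key scalar identity: Rc * A = Cs * K^2 * L
  have hR : Rc * A = Cs * K ^ 2 * L := by
    rw [hRc, hCs, hAdef, hL, hK]
    push_cast
    field_simp [h3, h3b, h9]
    ring
  constructor
  · rintro ⟨ζ₀, v₀, hne, h1, h2⟩
    have hζ₀ : ζ₀ ≠ 0 := by
      intro h0
      apply hne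
      have hv : L * Complex.I * K * v₀ = 0 := by
        rw [h0] at h1; linear_combination h1
      have : v₀ = 0 := by
        rcases mul_eq_zero.mp hv with h' | h'
        · rcases mul_eq_zero.mp h' with h'' | h''
          · rcases mul_eq_zero.mp h'' with h3 | h3
            · exact absurd h3 hζc
            · exact absurd h3 hI
          · exact absurd h' (by simpa using mul_ne_zero (mul_ne_zero hζc hI) hkc)
        · exact h'
      rw [h0, this]
    have e2 : A * (ω - K * (vb:ℂ)) ^ 2 * ζ₀ = Cs * K ^ 2 * L * ζ₀ := by
      linear_combination (Complex.I * (ω - K * (vb:ℂ)) * A) * h1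
        + (Complex.I * K * L) * h2
        + (A * (ω - K * (vb:ℂ)) ^ 2 * ζ₀ - Cs * K ^ 2 * L * ζ₀) * Complex.I_sq
    -- cancel ζ₀ and A
    have e3 : A * (ω - K * (vb:ℂ)) ^ 2 = Cs * K ^ 2 * L :=
      mul_right_cancel₀ hζ₀ e2
    have hAne : A ≠ 0 := hAc
    apply mul_left_cancel₀ hAne
    linear_combination e3 - hR
  · intro hdisp
    have e : A * (ω - K * (vb:ℂ)) ^ 2 = Cs * K ^ 2 * L := by
      linear_combination A * hdisp + hR
    refine ⟨L * Complex.I * K, Complex.I * (ω - K * (vb:ℂ)), ?_, ?_, ?_⟩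
    · intro h
      have h' : L * Complex.I * K = 0 := congrArg Prod.fst h
      exact (mul_ne_zero (mul_ne_zero hζc hI) hkc) h'
    · ring
    · linear_combination (-Complex.I * Complex.I) * e
end

section
/- Let g > 0, α ≥ 1, v̄ ∈ ℝ and ζ̄ > (α−1)/2. Then there exists K > 0 such that for every real k with k² > K: (i) 1 + (α−1)k²/3 − 2ζ̄k²/3 < 0, hence (ii) g·(1+ζ̄)·k²·(1 + (α−1)k²/3 − 2ζ̄k²/3)/(1 + αk²/3) < 0, and therefore (iii) there exists no real number ω̃ satisfying (ω̃ − k·v̄)² = g·(1+ζ̄)·k²·(1 + (α−1)k²/3 − 2ζ̄k²/3)/(1 + αk²/3). -/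
/-- High-frequency instability of the naively expanded one-layer model when
ζ̄ > (α−1)/2. -/
theorem stmt_11 (g α vb ζb : ℝ) (hg : 0 < g) (hα : 1 ≤ α) (hζb : (α - 1) / 2 < ζb) :
    ∃ K : ℝ, 0 < K ∧ ∀ k : ℝ, K < k ^ 2 →
      (1 + (α - 1) * k ^ 2 / 3 - 2 * ζb * k ^ 2 / 3 < 0) ∧
      (g * (1 + ζb) * k ^ 2 * (1 + (α - 1) * k ^ 2 / 3 - 2 * ζb * k ^ 2 / 3)
        / (1 + α * k ^ 2 / 3) < 0) ∧
      ¬ ∃ ω : ℝ, (ω - k * vb) ^ 2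
        = g * (1 + ζb) * k ^ 2 * (1 + (α - 1) * k ^ 2 / 3 - 2 * ζb * k ^ 2 / 3)
          / (1 + α * k ^ 2 / 3) := by
  have hc : 0 < 2 * ζb - (α - 1) := by linarith
  refine ⟨3 / (2 * ζb - (α - 1)), by positivity, fun k hk => ?_⟩
  have hk2 : 0 < k ^ 2 := lt_trans (by positivity) hk
  have h1 : 1 + (α - 1) * k ^ 2 / 3 - 2 * ζb * k ^ 2 / 3 < 0 := by
    have : 3 < (2 * ζb - (α - 1)) * k ^ 2 := by
      rw [div_lt_iff₀ hc] at hk; linarith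
    linarith
  have hζ0 : 0 < 1 + ζb := by nlinarith
  have hden : 0 < 1 + α * k ^ 2 / 3 := by nlinarith
  have h2 : g * (1 + ζb) * k ^ 2 * (1 + (α - 1) * k ^ 2 / 3 - 2 * ζb * k ^ 2 / 3)
      / (1 + α * k ^ 2 / 3) < 0 := by
    apply div_neg_of_neg_of_pos _ hden
    have hpos : 0 < g * (1 + ζb) * k ^ 2 := by positivity
    exact mul_neg_of_pos_of_neg hpos h1
  refine ⟨h1, h2, ?_⟩
  rintro ⟨ω, hω⟩
  nlinarith [sq_nonneg (ω - k * vb)]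
end

section
/- Let α > 1 and ζ̄ ∈ ℝ. Then there exists K > 0 such that for every real k with k² > K one has 1 + (α−1)k²/3 − 2k²ζ̄/(3(1 + αk²/3)) > 0. Consequently, for any g > 0, ζ̄ > −1 and v̄ ∈ ℝ, for every such k there exist real numbers ω satisfying (ω − kv̄)² = g(1+ζ̄)k²·(1 + (α−1)k²/3 − 2k²ζ̄/(3(1 + αk²/3)))/(1 + αk²/3). -/
/-- High-frequency stability of the one-layer improved model with the nonlocal
stabilizing operators: the dispersion ratio stays positive at high frequencies. -/
theorem stmt_12 (α ζb : ℝ) (hα : 1 < α) :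
    ∃ K : ℝ, 0 < K ∧ ∀ k : ℝ, K < k ^ 2 →
      (0 < 1 + (α - 1) * k ^ 2 / 3 - 2 * k ^ 2 * ζb / (3 * (1 + α * k ^ 2 / 3))) ∧
      ∀ g vb : ℝ, 0 < g → -1 < ζb → ∃ ω : ℝ,
        (ω - k * vb) ^ 2
          = g * (1 + ζb) * k ^ 2
            * (1 + (α - 1) * k ^ 2 / 3 - 2 * k ^ 2 * ζb / (3 * (1 + α * k ^ 2 / 3)))
            / (1 + α * k ^ 2 / 3) := by
  have hα0 : 0 < α := by linarith
  have hα1 : 0 < α - 1 := by linarith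
  refine ⟨6 * |ζb| / (α * (α - 1)) + 1, by positivity, fun k hk => ?_⟩
  have hk2 : (0:ℝ) ≤ k ^ 2 := sq_nonneg k
  have hkK : 6 * |ζb| / (α * (α - 1)) + 1 < k ^ 2 := hk
  have hKdiv : 6 * |ζb| / (α * (α - 1)) * (α * (α - 1)) = 6 * |ζb| := by
    field_simp
  have hd : (0:ℝ) < 3 * (1 + α * k ^ 2 / 3) := by nlinarith
  have habs : ζb ≤ |ζb| := le_abs_self ζb
  have habs0 : 0 ≤ |ζb| := abs_nonneg ζb
  have hterm : 2 * k ^ 2 * ζb / (3 * (1 + α * k ^ 2 / 3)) ≤ 2 * |ζb| / α := by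
    rw [div_le_div_iff₀ hd hα0]
    nlinarith [mul_nonneg hk2 (sub_nonneg.mpr habs)]
  have hpos : 0 < 1 + (α - 1) * k ^ 2 / 3
      - 2 * k ^ 2 * ζb / (3 * (1 + α * k ^ 2 / 3)) := by
    have hgrow : 2 * |ζb| / α < (α - 1) * k ^ 2 / 3 := by
      rw [div_lt_div_iff₀ hα0 (by norm_num : (0:ℝ) < 3)]
      nlinarith [mul_lt_mul_of_pos_left hkK (mul_pos hα0 hα1)]
    linarith
  refine ⟨hpos, fun g vb hg hζ => ?_⟩
  set R := g * (1 + ζb) * k ^ 2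
      * (1 + (α - 1) * k ^ 2 / 3 - 2 * k ^ 2 * ζb / (3 * (1 + α * k ^ 2 / 3)))
      / (1 + α * k ^ 2 / 3) with hR
  have hd' : (0:ℝ) < 1 + α * k ^ 2 / 3 := by nlinarith
  have hRnn : 0 ≤ R := by
    apply div_nonneg _ hd'.le
    have h1ζ : (0:ℝ) ≤ 1 + ζb := by linarith
    have : 0 ≤ g * (1 + ζb) * k ^ 2 := by positivity
    exact mul_nonneg this hpos.le
  exact ⟨k * vb + Real.sqrt R, by
    simp [Real.sq_sqrt hRnn]⟩
end

section
/- Let ν > 0, α ≥ 1, κ₁ < κ₂ be real numbers, let ζ̄ > (α−1)/(κ₂−κ₁) and c > 0. Then there exists K > 0 such that for every real k with k² > K: (i) 1 + ν(α−1)k² − ν(κ₂−κ₁)k²ζ̄ < 0, hence (ii) c·k²·(1 + ν(α−1)k² − ν(κ₂−κ₁)k²ζ̄)/(1 + ναk²) < 0, and therefore (iii) there exists no real number ω̃ with ω̃² = c·k²·(1 + ν(α−1)k² − ν(κ₂−κ₁)k²ζ̄)/(1 + ναk²). -/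
/-- High-frequency instability of the naively expanded two-layer model when
κ₂ > κ₁ and ζ̄ > (α−1)/(κ₂−κ₁). -/
theorem stmt_14 (ν α κ₁ κ₂ ζb c : ℝ) (hν : 0 < ν) (hα : 1 ≤ α) (hκ : κ₁ < κ₂)
    (hζb : (α - 1) / (κ₂ - κ₁) < ζb) (hc : 0 < c) :
    ∃ K : ℝ, 0 < K ∧ ∀ k : ℝ, K < k ^ 2 →
      (1 + ν * (α - 1) * k ^ 2 - ν * (κ₂ - κ₁) * k ^ 2 * ζb < 0) ∧
      (c * k ^ 2 * (1 + ν * (α - 1) * k ^ 2 - ν * (κ₂ - κ₁) * k ^ 2 * ζb)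
        / (1 + ν * α * k ^ 2) < 0) ∧
      ¬ ∃ ω : ℝ, ω ^ 2
        = c * k ^ 2 * (1 + ν * (α - 1) * k ^ 2 - ν * (κ₂ - κ₁) * k ^ 2 * ζb)
          / (1 + ν * α * k ^ 2) := by
  have hκ' : 0 < κ₂ - κ₁ := by linarith
  have hd : 0 < (κ₂ - κ₁) * ζb - (α - 1) := by
    have := (div_lt_iff₀ hκ').mp hζb
    nlinarith
  set d := (κ₂ - κ₁) * ζb - (α - 1) with hdset
  refine ⟨1 / (ν * d), by positivity, fun k hk => ?_⟩
  have hνd : 0 < ν * d := by positivity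
  have hk2 : 1 < ν * d * k ^ 2 := by
    have := (div_lt_iff₀ hνd).mp hk
    nlinarith
  have h1 : 1 + ν * (α - 1) * k ^ 2 - ν * (κ₂ - κ₁) * k ^ 2 * ζb < 0 := by
    nlinarith [hk2]
  have hkpos : 0 < k ^ 2 := lt_trans (by positivity) hk
  have hden : 0 < 1 + ν * α * k ^ 2 := by nlinarith
  have h2 : c * k ^ 2 * (1 + ν * (α - 1) * k ^ 2 - ν * (κ₂ - κ₁) * k ^ 2 * ζb)
      / (1 + ν * α * k ^ 2) < 0 :=
    div_neg_of_neg_of_pos (mul_neg_of_pos_of_neg (by positivity) h1) hden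
  exact ⟨h1, h2, fun ⟨ω, hω⟩ => absurd (hω ▸ sq_nonneg ω) (not_le.mpr h2)⟩
end

section
/- There exists a constant C > 0 with the following property: for every Δx > 0, every M ≥ 0 and every function U : ℝ → ℝ that is five times continuously differentiable on the interval [−3Δx, 2Δx] with |U⁽⁵⁾(x)| ≤ M for all x ∈ [−3Δx, 2Δx], setting Ā_j = (1/Δx)·∫_{(j−1)Δx}^{jΔx} U(x) dx for j ∈ {−2, −1, 0, 1, 2}, one has |(1/30)·Ā_{−2} − (13/60)·Ā_{−1} + (47/60)·Ā_0 + (9/20)·Ā_1 − (1/20)·Ā_2 − U(0)| ≤ C·M·Δx⁵. -/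
/-!
The reconstruction error is a linear functional of `U` that vanishes on polynomials of degree
at most four (the weights are chosen exactly for this). Subtracting the degree-four Taylor
polynomial of `U` at the left end `-3Δx` therefore leaves the error of the Taylor remainder,
which is bounded by `M (5Δx)⁵ / 4!` on the whole stencil; each cell average and the point value
of the remainder inherit this bound, and the weights sum in absolute value to `23/15`.
-/

open Finset Set Nat

noncomputable def reconstructionError (Δx : ℝ) (U : ℝ → ℝ) : ℝ :=
  (1 / 30) * ((1 / Δx) * ∫ x in (-3 * Δx)..(-2 * Δx), U x)
    - (13 / 60) * ((1 / Δx) * ∫ x in (-2 * Δx)..(-1 * Δx), U x)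
    + (47 / 60) * ((1 / Δx) * ∫ x in (-1 * Δx)..(0 * Δx), U x)
    + (9 / 20) * ((1 / Δx) * ∫ x in (0 * Δx)..(1 * Δx), U x)
    - (1 / 20) * ((1 / Δx) * ∫ x in (1 * Δx)..(2 * Δx), U x)
    - U 0

theorem integral_sum_mul_pow_sub (n : ℕ) (c : ℕ → ℝ) (x₀ a b : ℝ) :
    ∫ x in a..b, ∑ k ∈ range n, c k * (x - x₀) ^ k =
      ∑ k ∈ range n, c k * (((b - x₀) ^ (k + 1) - (a - x₀) ^ (k + 1)) / (k + 1)) := by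
  rw [intervalIntegral.integral_finsetSum fun k _ => by
    apply Continuous.intervalIntegrable; fun_prop]
  refine sum_congr rfl fun k _ => ?_
  rw [intervalIntegral.integral_const_mul, intervalIntegral.integral_comp_sub_right
    (fun x => x ^ k), integral_pow]

theorem taylorWithinEval_eq_sum (f : ℝ → ℝ) (n : ℕ) (s : Set ℝ) (x₀ x : ℝ) :
    taylorWithinEval f n s x₀ x =
      ∑ k ∈ range (n + 1), iteratedDerivWithin k f s x₀ / k ! * (x - x₀) ^ k := by
  rw [taylor_within_apply]
  refine sum_congr rfl fun k _ => ?_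
  rw [smul_eq_mul]
  ring

theorem abs_sub_taylorWithinEval_le {f : ℝ → ℝ} {a b M x : ℝ} {n : ℕ} (hab : a ≤ b)
    (hf : ContDiffOn ℝ (n + 1) f (Icc a b)) (hx : x ∈ Icc a b)
    (hM : ∀ y ∈ Icc a b, |iteratedDerivWithin (n + 1) f (Icc a b) y| ≤ M) :
    |f x - taylorWithinEval f n (Icc a b) a x| ≤ M * (b - a) ^ (n + 1) / n ! := by
  have hM0 : 0 ≤ M := (abs_nonneg _).trans (hM a (left_mem_Icc.mpr hab))
  calc |f x - taylorWithinEval f n (Icc a b) a x| ≤ M * (x - a) ^ (n + 1) / n ! :=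
        taylor_mean_remainder_bound hab hf hx hM
    _ ≤ M * (b - a) ^ (n + 1) / n ! := by
        gcongr
        · linarith [hx.1]
        · exact hx.2

theorem abs_one_div_mul_integral_le {f : ℝ → ℝ} {a b h K : ℝ} (hh : 0 < h) (hba : b - a = h)
    (hf : ∀ x ∈ Icc a b, |f x| ≤ K) :
    |(1 / h) * ∫ x in a..b, f x| ≤ K := by
  have hab : a ≤ b := by linarith
  have hint : ‖∫ x in a..b, f x‖ ≤ K * |b - a| :=
    intervalIntegral.norm_integral_le_of_norm_le_const fun x hx =>
      hf x (Ioc_subset_Icc_self ((uIoc_of_le hab) ▸ hx))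
  rw [hba, abs_of_pos hh, Real.norm_eq_abs] at hint
  rw [abs_mul, abs_of_pos (one_div_pos.mpr hh)]
  calc 1 / h * |∫ x in a..b, f x| ≤ 1 / h * (K * h) := by gcongr
    _ = K := by field_simp

section reconstructionError

variable {Δx : ℝ}

theorem reconstructionError_sum_mul_pow_sub (hΔx : Δx ≠ 0) (c : ℕ → ℝ) (x₀ : ℝ) :
    reconstructionError Δx (fun x => ∑ k ∈ range 5, c k * (x - x₀) ^ k) = 0 := by
  simp only [reconstructionError, integral_sum_mul_pow_sub]
  simp only [sum_range_succ, sum_range_zero]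
  field_simp
  ring

theorem reconstructionError_sub (hΔx : 0 < Δx) {U V : ℝ → ℝ}
    (hU : ContinuousOn U (Icc (-(3 * Δx)) (2 * Δx)))
    (hV : ContinuousOn V (Icc (-(3 * Δx)) (2 * Δx))) :
    reconstructionError Δx (fun x => U x - V x) =
      reconstructionError Δx U - reconstructionError Δx V := by
  have hsub : ∀ i j : ℝ, -3 ≤ i → i ≤ j → j ≤ 2 →
      ∫ x in (i * Δx)..(j * Δx), (U x - V x) =
        (∫ x in (i * Δx)..(j * Δx), U x) - ∫ x in (i * Δx)..(j * Δx), V x := by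
    intro i j hi hij hj
    have hcell : uIcc (i * Δx) (j * Δx) ⊆ Icc (-(3 * Δx)) (2 * Δx) :=
      uIcc_subset_Icc ⟨by nlinarith, by nlinarith⟩ ⟨by nlinarith, by nlinarith⟩
    exact intervalIntegral.integral_sub (hU.mono hcell).intervalIntegrable
      (hV.mono hcell).intervalIntegrable
  simp only [reconstructionError]
  rw [hsub (-3) (-2), hsub (-2) (-1), hsub (-1) 0, hsub 0 1, hsub 1 2]
  · ring
  all_goals norm_num

theorem abs_reconstructionError_le (hΔx : 0 < Δx) {f : ℝ → ℝ} {K : ℝ}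
    (hf : ∀ x ∈ Icc (-(3 * Δx)) (2 * Δx), |f x| ≤ K) :
    |reconstructionError Δx f| ≤ 38 / 15 * K := by
  have cell : ∀ i : ℝ, -3 ≤ i → i ≤ 1 →
      |(1 / Δx) * ∫ x in (i * Δx)..((i + 1) * Δx), f x| ≤ K := fun i hi hi' =>
    abs_one_div_mul_integral_le hΔx (by ring) fun x hx =>
      hf x ⟨by nlinarith [hx.1], by nlinarith [hx.2]⟩
  have h1 := abs_le.mp (cell (-3) le_rfl (by norm_num))
  have h2 := abs_le.mp (cell (-2) (by norm_num) (by norm_num))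
  have h3 := abs_le.mp (cell (-1) (by norm_num) (by norm_num))
  have h4 := abs_le.mp (cell 0 (by norm_num) (by norm_num))
  have h5 := abs_le.mp (cell 1 (by norm_num) le_rfl)
  have h0 := abs_le.mp (hf 0 ⟨by linarith, by linarith⟩)
  norm_num at h1 h2 h3 h4 h5
  simp only [reconstructionError]
  norm_num
  rw [abs_le]
  constructor <;> linarith [h1.1, h1.2, h2.1, h2.2, h3.1, h3.2, h4.1, h4.2, h5.1, h5.2, h0.1, h0.2]

end reconstructionError

/-- Fifth-order accuracy of the cell-average-to-nodal-value reconstruction formula. -/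
theorem stmt_18 :
    ∃ C : ℝ, 0 < C ∧ ∀ Δx : ℝ, 0 < Δx → ∀ M : ℝ, 0 ≤ M → ∀ U : ℝ → ℝ,
      ContDiffOn ℝ 5 U (Set.Icc (-(3 * Δx)) (2 * Δx)) →
      (∀ x ∈ Set.Icc (-(3 * Δx)) (2 * Δx),
        |iteratedDerivWithin 5 U (Set.Icc (-(3 * Δx)) (2 * Δx)) x| ≤ M) →
      |(1 / 30) * ((1 / Δx) * ∫ x in (-3 * Δx)..(-2 * Δx), U x)
        - (13 / 60) * ((1 / Δx) * ∫ x in (-2 * Δx)..(-1 * Δx), U x)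
        + (47 / 60) * ((1 / Δx) * ∫ x in (-1 * Δx)..(0 * Δx), U x)
        + (9 / 20) * ((1 / Δx) * ∫ x in (0 * Δx)..(1 * Δx), U x)
        - (1 / 20) * ((1 / Δx) * ∫ x in (1 * Δx)..(2 * Δx), U x)
        - U 0| ≤ C * M * Δx ^ 5 := by
  refine ⟨38 / 15 * (5 ^ 5 / 24), by norm_num, fun Δx hΔx M _ U hU hM => ?_⟩
  set s := Icc (-(3 * Δx)) (2 * Δx)
  set P := taylorWithinEval U 4 s (-(3 * Δx))
  have hP : P = fun x => ∑ k ∈ range 5,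
      iteratedDerivWithin k U s (-(3 * Δx)) / k ! * (x - -(3 * Δx)) ^ k :=
    funext (taylorWithinEval_eq_sum U 4 s _)
  have hPcont : ContinuousOn P s := by rw [hP]; fun_prop
  have hremainder : ∀ x ∈ s, |U x - P x| ≤ M * (5 * Δx) ^ 5 / 24 := fun x hx => by
    have := abs_sub_taylorWithinEval_le (n := 4) (by linarith) hU hx hM
    rwa [show 2 * Δx - -(3 * Δx) = 5 * Δx by ring,
      show ((4 ! : ℕ) : ℝ) = 24 by norm_num [factorial]] at this
  have hPexact : reconstructionError Δx P = 0 :=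
    hP ▸ reconstructionError_sum_mul_pow_sub hΔx.ne' _ _
  calc |reconstructionError Δx U|
      = |reconstructionError Δx (fun x => U x - P x)| := by
        rw [reconstructionError_sub hΔx hU.continuousOn hPcont, hPexact, sub_zero]
    _ ≤ 38 / 15 * (M * (5 * Δx) ^ 5 / 24) := abs_reconstructionError_le hΔx hremainder
    _ = 38 / 15 * (5 ^ 5 / 24) * M * Δx ^ 5 := by ring
end
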